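/- arXiv:0912.3387 — 6 statements merged into one kernel-verified Lean document; each statement's English description precedes it below -/
import Mathlib

section
/- Let p be a prime, k ∈ ℕ, and l ∈ ℕ with kp ≤ l < kp + p. Then there exists a vector (α_0, …, α_{p−1}) ∈ F_p^p such that the polynomial Σ_{i=0}^{p−1} α_i (Y + i)^{kp+p−1} in F_p[Y] equals Y^l + P(Y) for some polynomial P of degree strictly less than kp. -/
/-! Expanding binomially, the coefficient of `Y ^ j` in `∑ α i * (Y + i) ^ N`, `N = k p + p - 1`,
is `(N choose j) * ∑ α i * i ^ (N - j)`. Write `l = k p + m`. If `m < p - 1`, take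
`α i = c * i ^ m`: for `j ≥ k p` the exponent `m + N - j` is below `2 (p - 1)`, and such a power sum
over `𝔽_p` is `-1` when the exponent is `p - 1` (i.e. `j = l`) and `0` otherwise. By Lucas,
`N choose l ≡ (p - 1 choose m) ≢ 0 mod p`, so `c` can normalise the coefficient of `Y ^ l` to `1`.
If `m = p - 1`, then `l = N` and `Y ^ N` itself works. -/

open Polynomial Finset

namespace FiniteField

variable {K : Type*} [Field K] [Fintype K]

theorem sum_pow_eq_sum_units_pow [DecidableEq K] {e : ℕ} (he : e ≠ 0) :
    ∑ x : K, x ^ e = ∑ x : Kˣ, (x : K) ^ e := by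
  calc ∑ x : K, x ^ e = ∑ x ∈ univ.filter (· ≠ 0), x ^ e :=
        (sum_filter_of_ne fun x _ hx => by rintro rfl; exact hx (zero_pow he)).symm
    _ = ∑ x : {a : K // a ≠ 0}, (x : K) ^ e := sum_subtype _ (by simp) _
    _ = ∑ x : Kˣ, (x : K) ^ e := Fintype.sum_equiv unitsEquivNeZero.symm _ _ fun _ => rfl

theorem sum_pow_of_lt_two_mul {e : ℕ} (he : e < 2 * (Fintype.card K - 1)) :
    ∑ x : K, x ^ e = if e = Fintype.card K - 1 then -1 else 0 := by
  classical
  rcases lt_or_ge e (Fintype.card K - 1) with hlt | hge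
  · rw [sum_pow_lt_card_sub_one K e hlt, if_neg hlt.ne]
  rw [sum_pow_eq_sum_units_pow (by omega), sum_pow_units]
  exact if_congr ⟨fun h => Nat.eq_of_dvd_of_lt_two_mul (by omega) h he, fun h => h ▸ dvd_rfl⟩
    rfl rfl

end FiniteField

theorem ZMod.sum_fin_natCast {M : Type*} [AddCommMonoid M] (n : ℕ) [NeZero n]
    (f : ZMod n → M) : ∑ i : Fin n, f (i : ℕ) = ∑ x, f x := by
  refine Fintype.sum_bijective _ ((Fintype.bijective_iff_injective_and_card _).2 ⟨?_, by simp⟩)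
    _ _ fun _ => rfl
  exact Function.LeftInverse.injective (g := fun x => ⟨x.val, x.val_lt⟩)
    fun i => Fin.ext (ZMod.val_cast_of_lt i.isLt)

theorem Polynomial.coeff_sum_C_mul_X_add_C_pow {R ι : Type*} [CommSemiring R] (s : Finset ι)
    (α a : ι → R) (n j : ℕ) :
    (∑ i ∈ s, C (α i) * (X + C (a i)) ^ n).coeff j =
      n.choose j * ∑ i ∈ s, α i * a i ^ (n - j) := by
  simp only [finsetSum_coeff, coeff_C_mul, coeff_X_add_C_pow, mul_sum]
  exact sum_congr rfl fun _ _ => by ring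

theorem ZMod.natCast_choose_mul_add_ne_zero {p : ℕ} [hp : Fact p.Prime] {a b : ℕ} (k : ℕ)
    (hb : b < p) (hab : a ≤ b) : ((k * p + b).choose (k * p + a) : ZMod p) ≠ 0 := by
  have hmod (c : ℕ) (hc : c < p) : (k * p + c) % p = c := by
    rw [Nat.mul_add_mod_self_right, Nat.mod_eq_of_lt hc]
  have hdiv (c : ℕ) (hc : c < p) : (k * p + c) / p = k := by
    rw [add_comm, Nat.add_mul_div_right _ _ hp.out.pos, Nat.div_eq_of_lt hc, zero_add]
  have lucas := (ZMod.natCast_eq_natCast_iff _ _ _).2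
    (Choose.choose_modEq_choose_mod_mul_choose_div_nat (n := k * p + b) (k := k * p + a) (p := p))
  rw [lucas, hmod b hb, hmod a (hab.trans_lt hb), hdiv b hb, hdiv a (hab.trans_lt hb),
    Nat.choose_self, mul_one, Ne, ZMod.natCast_eq_zero_iff]
  exact (Nat.Prime.coprime_iff_not_dvd hp.out).1 (hp.out.coprime_choose_of_lt hb hab)

theorem ZMod.coeff_sum_pow_mul_X_add_C_pow {p : ℕ} [Fact p.Prime] {k m j : ℕ} (hm : m < p - 1)
    (hj : k * p ≤ j) :
    (∑ x : ZMod p, C (x ^ m) * (X + C x) ^ (k * p + p - 1)).coeff j =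
      if j = k * p + m then -((k * p + p - 1).choose j : ZMod p) else 0 := by
  rw [coeff_sum_C_mul_X_add_C_pow]
  simp_rw [← pow_add]
  rcases lt_or_ge (k * p + p - 1) j with hN | hN
  · rw [Nat.choose_eq_zero_of_lt hN, if_neg (by omega), Nat.cast_zero, zero_mul]
  have he : m + (k * p + p - 1 - j) < 2 * (Fintype.card (ZMod p) - 1) := by
    rw [ZMod.card]; omega
  rw [FiniteField.sum_pow_of_lt_two_mul he, ZMod.card]
  by_cases hjl : j = k * p + m
  · rw [if_pos (by omega), if_pos hjl, mul_neg_one]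
  · rw [if_neg (by omega), if_neg hjl, mul_zero]

theorem interpolation_lemma (p : ℕ) (hp : p.Prime) (k l : ℕ)
    (hl1 : k * p ≤ l) (hl2 : l < k * p + p) :
    ∃ α : Fin p → ZMod p, ∃ P : Polynomial (ZMod p),
      P.degree < (k * p : ℕ) ∧
      (∑ i : Fin p, C (α i) * (X + C ((i : ℕ) : ZMod p)) ^ (k * p + p - 1))
        = X ^ l + P := by
  have := Fact.mk hp
  have := NeZero.of_pos hp.pos
  obtain ⟨m, rfl⟩ := Nat.exists_eq_add_of_le hl1
  rcases (show m = p - 1 ∨ m < p - 1 by omega) with rfl | hm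
  · refine ⟨Pi.single 0 (1 : ZMod p), 0, by rw [degree_zero]; exact WithBot.bot_lt_coe _, ?_⟩
    rw [Fintype.sum_eq_single 0 fun i hi => by simp [hi]]
    simp [Nat.add_sub_assoc hp.one_le]
  have hchoose : ((k * p + p - 1).choose (k * p + m) : ZMod p) ≠ 0 := by
    rw [Nat.add_sub_assoc hp.one_le]
    exact ZMod.natCast_choose_mul_add_ne_zero k (by omega) hm.le
  set c : ZMod p := -((k * p + p - 1).choose (k * p + m) : ZMod p)⁻¹
  set S := ∑ x : ZMod p, C (x ^ m) * (X + C x) ^ (k * p + p - 1)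
  have hS : ∑ i : Fin p, C (c * ((i : ℕ) : ZMod p) ^ m) * (X + C ((i : ℕ) : ZMod p)) ^
      (k * p + p - 1) = C c * S := by
    rw [ZMod.sum_fin_natCast p fun x => C (c * x ^ m) * (X + C x) ^ (k * p + p - 1), mul_sum]
    simp only [C_mul, mul_assoc]
  refine ⟨fun i => c * ((i : ℕ) : ZMod p) ^ m, C c * S - X ^ (k * p + m), ?_, by rw [hS]; ring⟩
  refine (degree_lt_iff_coeff_zero _ _).2 fun j hj => ?_
  rw [coeff_sub, coeff_C_mul, ZMod.coeff_sum_pow_mul_X_add_C_pow hm (by exact_mod_cast hj),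
    coeff_X_pow]
  split_ifs with hjl
  · rw [hjl, mul_neg, neg_mul, neg_neg, inv_mul_cancel₀ hchoose, sub_self]
  · rw [mul_zero, sub_zero]
end

section
/- Let q = 2^m with m ≥ 1 and u ∈ F_q a nonzero element. Define h_m(X) = Σ_{j=1}^{2m−1} X^(2^(2m−1) − 2^j). Then h_m(u) = u^(2^(2m−1) − 1). -/
theorem h_eval (m : ℕ) (hm : 1 ≤ m) (F : Type*) [Field F] [Fintype F]
    (hF : Fintype.card F = 2 ^ m) (u : F) (hu : u ≠ 0) :
    (∑ j ∈ Finset.Icc 1 (2 * m - 1), u ^ (2 ^ (2 * m - 1) - 2 ^ j))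
      = u ^ (2 ^ (2 * m - 1) - 1) := by
  -- characteristic 2
  haveI : CharP F (ringChar F) := ⟨fun x => ringChar.spec F x⟩
  obtain ⟨n, hp, hcard⟩ := FiniteField.card F (ringChar F)
  have hp2 : ringChar F = 2 := by
    have hdvd : ringChar F ∣ 2 ^ m := by
      rw [← hF, hcard]
      exact dvd_pow_self _ (by exact_mod_cast n.pos.ne')
    have := hp.dvd_of_dvd_pow hdvd
    exact (Nat.prime_dvd_prime_iff_eq hp Nat.prime_two).mp this
  haveI : CharP F 2 := hp2 ▸ ‹CharP F (ringChar F)›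
  have h2 : ∀ a : F, a + a = 0 := CharTwo.add_self_eq_zero
  -- u ^ (2^m - 1) = 1
  have hone : u ^ (2 ^ m - 1) = 1 := by
    have := FiniteField.pow_card_sub_one_eq_one u hu
    rwa [hF] at this
  set f : ℕ → F := fun j => u ^ (2 ^ (2 * m - 1) - 2 ^ j) with hf
  -- key periodicity
  have key : ∀ j ∈ Finset.Ioc 0 (m - 1), f (j + m) = f j := by
    intro j hj
    simp only [Finset.mem_Ioc] at hj
    have hjm : j + m ≤ 2 * m - 1 := by omega
    have hble : (2:ℕ) ^ (j + m) ≤ 2 ^ (2 * m - 1) :=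
      Nat.pow_le_pow_right (by norm_num) hjm
    have hcle : (2:ℕ) ^ j ≤ 2 ^ (j + m) :=
      Nat.pow_le_pow_right (by norm_num) (by omega)
    have hexp : (2 ^ (2 * m - 1) - 2 ^ (j + m)) + (2 ^ m - 1) * 2 ^ j
        = 2 ^ (2 * m - 1) - 2 ^ j := by
      have hmul : (2 ^ m - 1) * 2 ^ j = 2 ^ (j + m) - 2 ^ j := by
        rw [Nat.sub_mul, one_mul, ← pow_add, add_comm m j]
      rw [hmul]
      omega
    have : f (j + m) * (u ^ (2 ^ m - 1)) ^ (2 ^ j) = f j := by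
      rw [hf, ← pow_mul, ← pow_add, hexp]
    rw [hone, one_pow, mul_one] at this
    exact this
  have hmid : f m = u ^ (2 ^ (2 * m - 1) - 1) := by
    have hble : (2:ℕ) ^ m ≤ 2 ^ (2 * m - 1) :=
      Nat.pow_le_pow_right (by norm_num) (by omega)
    have h1le : (1:ℕ) ≤ 2 ^ m := Nat.one_le_two_pow
    have hexp : (2 ^ (2 * m - 1) - 2 ^ m) + (2 ^ m - 1)
        = 2 ^ (2 * m - 1) - 1 := by omega
    have : f m * u ^ (2 ^ m - 1) = u ^ (2 ^ (2 * m - 1) - 1) := by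
      rw [hf, ← pow_add, hexp]
    rwa [hone, mul_one] at this
  -- split the sum
  have hIcc : Finset.Icc 1 (2 * m - 1) = Finset.Ioc 0 (2 * m - 1) := by
    ext x; simp [Nat.lt_iff_add_one_le]
  rw [hIcc]
  have hsplit : (∑ j ∈ Finset.Ioc 0 m, f j) + (∑ j ∈ Finset.Ioc m (2 * m - 1), f j)
      = ∑ j ∈ Finset.Ioc 0 (2 * m - 1), f j :=
    Finset.sum_Ioc_consecutive f (Nat.zero_le m) (by omega)
  rw [← hsplit]
  have htop : (∑ j ∈ Finset.Ioc 0 m, f j)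
      = (∑ j ∈ Finset.Ioc 0 (m - 1), f j) + f m := by
    have : m = (m - 1) + 1 := by omega
    rw [this, Finset.sum_Ioc_succ_top (Nat.zero_le _), ← this]
  have hre : (∑ j ∈ Finset.Ioc m (2 * m - 1), f j)
      = ∑ j ∈ Finset.Ioc 0 (m - 1), f j := by
    have hmap : (Finset.Ioc 0 (m - 1)).map (addRightEmbedding m)
        = Finset.Ioc m (2 * m - 1) := by
      rw [Finset.map_add_right_Ioc]
      congr 1 <;> omega
    rw [← hmap, Finset.sum_map]
    exact Finset.sum_congr rfl fun j hj => key j hj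
  rw [htop, hre, hmid]
  set A := ∑ j ∈ Finset.Ioc 0 (m - 1), f j
  linear_combination h2 A
end

section
/- Let k be a field with more than 2 elements, n ≥ 2, and let E = (X_1 + P(X_2,…,X_n), X_2, …, X_n) be a triangular (Jonquière) automorphism of k^n, where P ∈ k[X_2,…,X_n]. Choose c ∈ k with c ≠ 0, 1 and set d = (1−c)^(−1). Let S_c = (cX_1, X_2, …, X_n), S_d = (dX_1, X_2, …, X_n), and F = S_d E S_d^{-1}. Then S_c F^{-1} S_c^{-1} F = E. -/
/-!
Every map in the identity has the shape `x ↦ (a x₁ + b P(x), x₂, …, xₙ)`, and since `P` does not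
depend on `x₁` these maps compose like the affine maps `t ↦ a t + b` of the line. So the identity
is one in the affine group of `k`: with `S_c = (c, 0)`, `E = (1, 1)` and `F = (1, d)`, the commutator
`S_c F⁻¹ S_c⁻¹ F` is the translation by `d - c d = d (1 - c) = 1`, which is `E`.
-/

open Function

section ScaleShear

variable {ι k : Type*} [DecidableEq ι] [CommRing k] (i : ι) (P : (ι → k) → k)

def scaleShear (a b : k) (x : ι → k) : ι → k :=
  update x i (a * x i + b * P x)

variable {i P}

theorem scaleShear_comp (hP : ∀ x t, P (update x i t) = P x) (a b a' b' : k) :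
    scaleShear i P a b ∘ scaleShear i P a' b' = scaleShear i P (a * a') (a * b' + b) := by
  funext x
  simp only [scaleShear, comp_apply, hP, update_self, update_idem]
  ring_nf

end ScaleShear

theorem triangular_is_commutator_general (k : Type*) [Field k] (n : ℕ)
    (P : (Fin (n + 2) → k) → k)
    (hP : ∀ x y : Fin (n + 2) → k, (∀ i, i ≠ 0 → x i = y i) → P x = P y)
    (c d : k) (hc0 : c ≠ 0) (hc1 : c ≠ 1) (hd : d = (1 - c)⁻¹)
    (E Einv Sc Scinv Sd Sdinv F Finv : (Fin (n + 2) → k) → (Fin (n + 2) → k))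
    (hE : ∀ x, E x = Function.update x 0 (x 0 + P x))
    (hEinv : ∀ x, Einv x = Function.update x 0 (x 0 - P x))
    (hSc : ∀ x, Sc x = Function.update x 0 (c * x 0))
    (hScinv : ∀ x, Scinv x = Function.update x 0 (c⁻¹ * x 0))
    (hSd : ∀ x, Sd x = Function.update x 0 (d * x 0))
    (hSdinv : ∀ x, Sdinv x = Function.update x 0 (d⁻¹ * x 0))
    (hF : F = Sd ∘ E ∘ Sdinv) (hFinv : Finv = Sd ∘ Einv ∘ Sdinv) :
    Sc ∘ Finv ∘ Scinv ∘ F = E := by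
  have hPi : ∀ x t, P (update x 0 t) = P x :=
    fun x t ↦ hP _ _ fun j hj ↦ update_of_ne hj _ _
  have as_scaleShear : ∀ (f : (Fin (n + 2) → k) → Fin (n + 2) → k) (a b : k),
      (∀ x, f x = update x 0 (a * x 0 + b * P x)) → f = scaleShear 0 P a b :=
    fun f a b hf ↦ funext hf
  rw [hF, hFinv, as_scaleShear E 1 1 (by simp [hE]),
    as_scaleShear Einv 1 (-1) (by simp [hEinv, sub_eq_add_neg]),
    as_scaleShear Sc c 0 (by simp [hSc]), as_scaleShear Scinv c⁻¹ 0 (by simp [hScinv]),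
    as_scaleShear Sd d 0 (by simp [hSd]), as_scaleShear Sdinv d⁻¹ 0 (by simp [hSdinv])]
  simp only [scaleShear_comp hPi]
  have h1c : (1 : k) - c ≠ 0 := sub_ne_zero.mpr hc1.symm
  subst hd
  congr 1
  · field_simp
  · field_simp
    ring

/-- For a field `k` with more than 2 elements, a triangular map
`E = (X₁ + P(X₂,…,Xₙ), X₂, …, Xₙ)` on `k^(n+2)` and `c ≠ 0, 1`, `d = (1-c)⁻¹`,
`F = S_d ∘ E ∘ S_d⁻¹`, one has `S_c ∘ F⁻¹ ∘ S_c⁻¹ ∘ F = E`. -/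
theorem triangular_is_commutator (k : Type*) [Field k] (hcard : 2 < Nat.card k) (n : ℕ)
    (P : (Fin (n + 2) → k) → k)
    (hP : ∀ x y : Fin (n + 2) → k, (∀ i, i ≠ 0 → x i = y i) → P x = P y)
    (c d : k) (hc0 : c ≠ 0) (hc1 : c ≠ 1) (hd : d = (1 - c)⁻¹)
    (E Einv Sc Scinv Sd Sdinv F Finv : (Fin (n + 2) → k) → (Fin (n + 2) → k))
    (hE : ∀ x, E x = Function.update x 0 (x 0 + P x))
    (hEinv : ∀ x, Einv x = Function.update x 0 (x 0 - P x))
    (hSc : ∀ x, Sc x = Function.update x 0 (c * x 0))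
    (hScinv : ∀ x, Scinv x = Function.update x 0 (c⁻¹ * x 0))
    (hSd : ∀ x, Sd x = Function.update x 0 (d * x 0))
    (hSdinv : ∀ x, Sdinv x = Function.update x 0 (d⁻¹ * x 0))
    (hF : F = Sd ∘ E ∘ Sdinv) (hFinv : Finv = Sd ∘ Einv ∘ Sdinv) :
    Sc ∘ Finv ∘ Scinv ∘ F = E :=
  triangular_is_commutator_general k n P hP c d hc0 hc1 hd E Einv Sc Scinv Sd Sdinv F Finv hE hEinv
    hSc hScinv hSd hSdinv hF hFinv
end

section
/- For n ≥ 3, every invertible linear map F ∈ GL_n(F_2) induces an even permutation of the set F_2^n. -/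
/-!
The sign of a permutation is a homomorphism to the abelian group `ℤˣ`, so it kills every
commutator. Over `𝔽₂` every invertible matrix has determinant `1`, and `SLₙ(𝔽₂)` is generated by
transvections (the invertible diagonal matrices being trivial). For `n ≥ 3` a third index `k` is
available, and the Steinberg relation `T_ij(c) = ⁅T_ik(c), T_kj(1)⁆` makes every transvection a
commutator. Hence `SLₙ(𝔽₂)` is perfect and acts on `𝔽₂ⁿ` by even permutations.
-/

open Matrix
open scoped commutatorElement

theorem Fintype.exists_ne_ne_of_three_le_card {α : Type*} [Fintype α] (h : 3 ≤ Fintype.card α)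
    (a b : α) : ∃ c, c ≠ a ∧ c ≠ b := by
  classical
  have hcard : ({a, b} : Finset α).card < (Finset.univ : Finset α).card :=
    Finset.card_le_two.trans_lt (by rw [Finset.card_univ]; omega)
  obtain ⟨c, -, hc⟩ := Finset.exists_mem_notMem_of_card_lt_card hcard
  simp only [Finset.mem_insert, Finset.mem_singleton, not_or] at hc
  exact ⟨c, hc⟩

theorem MonoidHom.eq_one_of_commutator_eq_top {G A : Type*} [Group G] [CommGroup A]
    (hG : commutator G = ⊤) (f : G →* A) (g : G) : f g = 1 :=
  Abelianization.commutator_subset_ker f (hG ▸ Subgroup.mem_top g)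

namespace Matrix.SpecialLinearGroup

variable {ι : Type*} [DecidableEq ι] [Fintype ι]

section CommRing

variable {R : Type*} [CommRing R]

theorem commutatorElement_transvection_transvection {i j k : ι} (hij : i ≠ j) (hik : i ≠ k)
    (hkj : k ≠ j) (a b : R) :
    ⁅transvection hik a, transvection hkj b⁆ = transvection hij (a * b) := by
  rw [commutatorElement_def, transvection_inv, transvection_inv]
  refine Subtype.ext ?_
  simp only [coe_mul, transvection_coe, mul_add, add_mul, Matrix.mul_one, Matrix.one_mul,
    single_mul_single_same, single_mul_single_of_ne _ _ _ _ hkj.symm,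
    single_mul_single_of_ne _ _ _ _ hik.symm, single_mul_single_of_ne _ _ _ _ hij.symm,
    add_zero, ← single_neg, neg_mul, mul_neg]
  abel

theorem transvection_mem_commutator_of_ne {i j k : ι} (hij : i ≠ j) (hik : i ≠ k) (hkj : k ≠ j)
    (c : R) : transvection hij c ∈ commutator (SpecialLinearGroup ι R) := by
  rw [← mul_one c, ← commutatorElement_transvection_transvection hij hik hkj]
  exact Subgroup.commutator_mem_commutator (Subgroup.mem_top _) (Subgroup.mem_top _)

theorem exists_toLin'_eq [Subsingleton Rˣ] (f : (ι → R) ≃ₗ[R] (ι → R)) :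
    ∃ A : SpecialLinearGroup ι R, toLin' A = f := by
  refine ⟨⟨LinearMap.toMatrix' f, ?_⟩, LinearEquiv.toLinearMap_injective ?_⟩
  · rw [LinearMap.det_toMatrix', ← LinearEquiv.coe_det, Subsingleton.elim f.det 1, Units.val_one]
  · exact Matrix.toLin'_toMatrix' _

end CommRing

theorem diag2n_one {F : Type*} [Field F] {i j : ι} (hij : i ≠ j) :
    diag2n hij (1 : F) one_ne_zero = 1 := by
  ext
  simp [diag2n_coe, one_apply]

theorem commutator_eq_top_zmod_two (h : 3 ≤ Fintype.card ι) :
    commutator (SpecialLinearGroup ι (ZMod 2)) = ⊤ := by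
  have : Nontrivial ι := Fintype.one_lt_card_iff_nontrivial.mp (by omega)
  refine eq_top_iff.mpr fun A _ ↦ diagonal_transvection_induction' (· ∈ commutator _) A ?_ ?_
    (fun _ _ ↦ mul_mem)
  · intro i j hij c hc
    obtain rfl : c = 1 := by fin_cases c; exacts [(hc rfl).elim, rfl]
    rw [diag2n_one]
    exact one_mem _
  · intro i j hij c
    obtain ⟨k, hki, hkj⟩ := Fintype.exists_ne_ne_of_three_le_card h i j
    exact transvection_mem_commutator_of_ne hij hki.symm hkj c

end Matrix.SpecialLinearGroup

theorem linear_even (n : ℕ) (hn : 3 ≤ n)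
    (F : (Fin n → ZMod 2) ≃ₗ[ZMod 2] (Fin n → ZMod 2)) :
    Equiv.Perm.sign (F.toEquiv : Equiv.Perm (Fin n → ZMod 2)) = 1 := by
  obtain ⟨A, rfl⟩ := SpecialLinearGroup.exists_toLin'_eq F
  have hperfect : commutator (SpecialLinearGroup (Fin n) (ZMod 2)) = ⊤ :=
    SpecialLinearGroup.commutator_eq_top_zmod_two (by simpa using hn)
  let signHom : SpecialLinearGroup (Fin n) (ZMod 2) →* ℤˣ :=
    Equiv.Perm.sign.comp ((MulAction.toPermHom _ (Fin n → ZMod 2)).comp SpecialLinearGroup.toLin')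
  exact signHom.eq_one_of_commutator_eq_top hperfect A
end

section
/- Let q = 2^m, k = 2^(2m−1), and h = Σ_{j=1}^{2m−1} X^(k − 2^j) ∈ F_2[X]. Consider the 2×2 matrix N(X) over F_2[X] with rows (X^k + h, X^(k−1)) and (X^(k−1), h), and let F̃ = [[0,1],[1,1]]. Then for every u ∈ F_{2^m}^*, the matrix (F̃ · N(u) · F̃)² equals diag(u^{-1}, u). -/
/-!
In characteristic 2 with `u ^ 2 ^ m = u`, the orbit `u, u ^ 2, u ^ 4, …` of Frobenius has
period dividing `m`, so the sum of `u ^ 2 ^ j` over `j < 2m` counts every term twice and vanishes.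
Dropping the `j = 0` term shows `∑_{j=1}^{2m-1} u⁻¹ ^ 2 ^ j = u⁻¹`, hence `h = u ^ k * u⁻¹ = u ^ (k-1)`.
With `h = u ^ (k-1)`, conjugating `N(u)` by `F̃` gives `diag(u ^ (k-1), u ^ k)`, and `u ^ k` is the
square root of `u` because `u ^ 2k = u ^ (q ^ 2) = u`.
-/

open Finset

section CharTwo

variable {R : Type*} [CommRing R] [CharP R 2]

theorem sum_range_two_mul_pow_two_pow_eq_zero {m : ℕ} {x : R} (hx : x ^ 2 ^ m = x) :
    ∑ j ∈ range (2 * m), x ^ 2 ^ j = 0 := by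
  have hperiodic : ∀ j, x ^ 2 ^ (m + j) = x ^ 2 ^ j := fun j => by rw [pow_add, pow_mul, hx]
  rw [two_mul, sum_range_add]
  simp only [hperiodic, CharTwo.add_self_eq_zero]

theorem sum_Icc_pow_two_pow_eq_self {m : ℕ} (hm : 1 ≤ m) {x : R} (hx : x ^ 2 ^ m = x) :
    ∑ j ∈ Icc 1 (2 * m - 1), x ^ 2 ^ j = x := by
  have hsum := sum_range_two_mul_pow_two_pow_eq_zero hx
  rw [sum_range_eq_add_Ico _ (by omega), pow_zero, pow_one,
    show Ico 1 (2 * m) = Icc 1 (2 * m - 1) by ext; simp; omega] at hsum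
  rw [eq_neg_of_add_eq_zero_right hsum, CharTwo.neg_eq]

theorem fibonacci_mul_mul_fibonacci_eq_diagonal (b s : R) :
    !![0, 1; 1, 1] * !![s + b, b; b, b] * !![0, 1; 1, 1] = Matrix.diagonal ![b, s] := by
  ext i j
  fin_cases i <;> fin_cases j <;>
    simp [Matrix.mul_apply, Fin.sum_univ_two, CharTwo.add_self_eq_zero, add_assoc]

end CharTwo

theorem sq_pow_two_pow_two_mul_sub_one {M : Type*} [Monoid M] {m : ℕ} (hm : 1 ≤ m) {u : M}
    (hu : u ^ 2 ^ m = u) : (u ^ 2 ^ (2 * m - 1)) ^ 2 = u := by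
  rw [← pow_mul, ← pow_succ, show 2 * m - 1 + 1 = m + m by omega, pow_add, pow_mul, hu, hu]

theorem sq_pow_two_pow_two_mul_sub_one_sub_one {G : Type*} [CommGroupWithZero G] {m : ℕ}
    (hm : 1 ≤ m) {u : G} (hu₀ : u ≠ 0) (hu : u ^ 2 ^ m = u) :
    (u ^ (2 ^ (2 * m - 1) - 1)) ^ 2 = u⁻¹ := by
  rw [pow_sub₀ u hu₀ Nat.one_le_two_pow, pow_one, mul_pow, sq_pow_two_pow_two_mul_sub_one hm hu,
    inv_pow, sq, mul_inv_rev, mul_inv_cancel_left₀ hu₀]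

theorem sum_pow_two_pow_sub_two_pow {K : Type*} [Field K] [CharP K 2] {m : ℕ} (hm : 1 ≤ m)
    {u : K} (hu₀ : u ≠ 0) (hu : u ^ 2 ^ m = u) :
    ∑ j ∈ Icc 1 (2 * m - 1), u ^ (2 ^ (2 * m - 1) - 2 ^ j) = u ^ (2 ^ (2 * m - 1) - 1) := by
  have hinv : u⁻¹ ^ 2 ^ m = u⁻¹ := by rw [inv_pow, hu]
  calc ∑ j ∈ Icc 1 (2 * m - 1), u ^ (2 ^ (2 * m - 1) - 2 ^ j)
      = u ^ 2 ^ (2 * m - 1) * ∑ j ∈ Icc 1 (2 * m - 1), u⁻¹ ^ 2 ^ j := by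
        rw [mul_sum]
        refine sum_congr rfl fun j hj => ?_
        rw [pow_sub₀ u hu₀ (Nat.pow_le_pow_right two_pos (mem_Icc.1 hj).2), inv_pow]
    _ = u ^ (2 ^ (2 * m - 1) - 1) := by
        rw [sum_Icc_pow_two_pow_eq_self hm hinv, pow_sub₀ u hu₀ Nat.one_le_two_pow, pow_one]

/-- For `q = 2^m`, `k = 2^(2m-1)`, `h(u) = Σ_{j=1}^{2m-1} u^(k-2^j)`, the square of
`F̃ ⬝ N(u) ⬝ F̃` equals `diag(u⁻¹, u)` for every nonzero `u` in `F_{2^m}`. -/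
theorem tilde_F_B_F_squared (m : ℕ) (hm : 1 ≤ m) (F : Type*) [Field F] [Fintype F]
    (hF : Fintype.card F = 2 ^ m) (u : F) (hu : u ≠ 0)
    (k : ℕ) (hk : k = 2 ^ (2 * m - 1)) (h : F)
    (hh : h = ∑ j ∈ Finset.Icc 1 (2 * m - 1), u ^ (k - 2 ^ j))
    (N Ft : Matrix (Fin 2) (Fin 2) F)
    (hN : N = Matrix.of ![![u ^ k + h, u ^ (k - 1)], ![u ^ (k - 1), h]])
    (hFt : Ft = Matrix.of ![![0, 1], ![1, 1]]) :
    (Ft * N * Ft) ^ 2 = Matrix.of ![![u⁻¹, 0], ![0, u]] := by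
  have : CharP F 2 := charP_of_card_eq_prime_pow hF
  have hfrob : u ^ 2 ^ m = u := hF ▸ FiniteField.pow_card u
  have hh' : h = u ^ (k - 1) := by rw [hh, hk, sum_pow_two_pow_sub_two_pow hm hu hfrob]
  rw [hN, hFt, hh', fibonacci_mul_mul_fibonacci_eq_diagonal, Matrix.diagonal_pow,
    Matrix.diagonal_fin_two]
  simp [hk, sq_pow_two_pow_two_mul_sub_one hm hfrob,
    sq_pow_two_pow_two_mul_sub_one_sub_one hm hu hfrob]
end

section
/- Let p be a prime, q = p^r, n ≥ 3, and fix α_2 ∈ {0, …, p−1}. For each t ∈ {0,…,p−1} let F_t be the polynomial map of F_q^n given by F_t = (X_1 + c_t (X_2 + t)^{p−1} X_3^{p−1} ⋯ X_n^{p−1}, X_2, …, X_n), where (c_0,…,c_{p−1}) ∈ F_p^p is a vector such that Σ_t c_t (Y+t)^{p−1} = Y^{α_2} in F_p[Y]. Then the composition F_0 ∘ F_1 ∘ ⋯ ∘ F_{p−1} equals the map (X_1 + X_2^{α_2} X_3^{p−1} ⋯ X_n^{p−1}, X_2, …, X_n). -/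
open Polynomial Function

/-!
Each `F_t` is a shear `x ↦ x + g_t(x) e₁` whose increment `g_t` does not read the first
coordinate, so shears of this kind compose by adding their increments. The composition is therefore
the shear by `Σ_t c_t (X₂ + t)^(p-1) X₃^(p-1) ⋯ Xₙ^(p-1)`, and evaluating the interpolation
identity `Σ_t c_t (Y + t)^(p-1) = Y^α₂` at `Y = X₂` (through `𝔽_p → F`) turns this into
`X₂^α₂ X₃^(p-1) ⋯ Xₙ^(p-1)`.
-/

section Shear

variable {ι R : Type*} [DecidableEq ι] [AddCommMonoid R]

def shear (i : ι) (g : (ι → R) → R) (x : ι → R) : ι → R :=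
  update x i (x i + g x)

lemma shear_comp_shear {i : ι} {g h : (ι → R) → R} (hg : ∀ x b, g (update x i b) = g x) :
    shear i g ∘ shear i h = shear i (g + h) := by
  funext x
  simp only [comp_apply, shear, hg, update_self, update_idem, Pi.add_apply, add_assoc,
    add_comm (g x)]

lemma foldr_comp_map_shear {α : Type*} (i : ι) (g : α → (ι → R) → R)
    (hg : ∀ a x b, g a (update x i b) = g a x) (L : List α) :
    (L.map fun a => shear i (g a)).foldr (· ∘ ·) id = shear i (L.map g).sum := by
  induction L with
  | nil => funext x; simp [shear]
  | cons a L ih => simp only [List.map_cons, List.foldr_cons, ih, shear_comp_shear (hg a),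
      List.sum_cons]

end Shear

theorem interpolation_composition_general (p : ℕ) (n : ℕ)
    (α₂ : ℕ)
    (F : Type*) [Field F] [CharP F p]
    (c : Fin p → ZMod p)
    (hc : ∑ t : Fin p, C (c t) * (X + C ((t : ℕ) : ZMod p)) ^ (p - 1)
            = (X : Polynomial (ZMod p)) ^ α₂)
    (Ft : Fin p → (Fin (n + 3) → F) → (Fin (n + 3) → F))
    (hFt : ∀ t : Fin p, ∀ x : Fin (n + 3) → F,
      Ft t x = Function.update x 0
        (x 0 + ZMod.castHom (dvd_refl p) F (c t) * (x 1 + ((t : ℕ) : F)) ^ (p - 1)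
          * ∏ i ∈ Finset.univ.filter (fun i : Fin (n + 3) => 2 ≤ (i : ℕ)), x i ^ (p - 1))) :
    (List.ofFn Ft).foldr (· ∘ ·) id = fun x : Fin (n + 3) → F =>
      Function.update x 0
        (x 0 + x 1 ^ α₂
          * ∏ i ∈ Finset.univ.filter (fun i : Fin (n + 3) => 2 ≤ (i : ℕ)), x i ^ (p - 1)) := by
  set φ := ZMod.castHom (dvd_refl p) F
  set S := Finset.univ.filter (fun i : Fin (n + 3) => 2 ≤ (i : ℕ))
  set g : Fin p → (Fin (n + 3) → F) → F := fun t x =>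
    φ (c t) * (x 1 + ((t : ℕ) : F)) ^ (p - 1) * ∏ i ∈ S, x i ^ (p - 1)
  have hFt_shear : Ft = fun t => shear 0 (g t) := by
    funext t x
    rw [hFt, shear]
  have hg : ∀ t x b, g t (update x 0 b) = g t x := by
    intro t x b
    have hS : ∀ i ∈ S, update x 0 b i = x i := fun i hi =>
      update_of_ne (by rintro rfl; simp [S] at hi) _ _
    simp only [g, Finset.prod_congr rfl fun i hi => congrArg (· ^ (p - 1)) (hS i hi),
      update_of_ne (show (1 : Fin (n + 3)) ≠ 0 by simp)]
  have hinterp : ∀ y : F, ∑ t : Fin p, φ (c t) * (y + ((t : ℕ) : F)) ^ (p - 1) = y ^ α₂ := by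
    intro y
    simpa [eval₂_finsetSum, eval₂_pow] using congrArg (eval₂ φ y) hc
  funext x
  rw [hFt_shear, List.ofFn_eq_map, foldr_comp_map_shear 0 g hg, ← List.ofFn_eq_map,
    List.sum_ofFn, shear, Finset.sum_apply]
  simp only [g, ← Finset.sum_mul, hinterp]

/-- If `(c₀,…,c_{p-1}) ∈ F_p^p` satisfies `Σ_t c_t (Y+t)^(p-1) = Y^(α₂)` in `F_p[Y]`,
then the composition `F₀ ∘ F₁ ∘ ⋯ ∘ F_{p-1}` of the maps
`F_t = (X₁ + c_t (X₂+t)^(p-1) X₃^(p-1) ⋯ Xₙ^(p-1), X₂, …, Xₙ)` of `F_q^(n+3)` equals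
`(X₁ + X₂^(α₂) X₃^(p-1) ⋯ Xₙ^(p-1), X₂, …, Xₙ)`.  Coordinates are indexed by
`Fin (n+3)` (so `X₁ = x 0`, `X₂ = x 1`, the remaining variables are indices `≥ 2`). -/
theorem interpolation_composition (p r : ℕ) (hp : p.Prime) (hr : 1 ≤ r) (n : ℕ)
    (α₂ : ℕ) (hα₂ : α₂ ≤ p - 1)
    (F : Type*) [Field F] [Fintype F] [CharP F p] (hF : Fintype.card F = p ^ r)
    (c : Fin p → ZMod p)
    (hc : ∑ t : Fin p, C (c t) * (X + C ((t : ℕ) : ZMod p)) ^ (p - 1)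
            = (X : Polynomial (ZMod p)) ^ α₂)
    (Ft : Fin p → (Fin (n + 3) → F) → (Fin (n + 3) → F))
    (hFt : ∀ t : Fin p, ∀ x : Fin (n + 3) → F,
      Ft t x = Function.update x 0
        (x 0 + ZMod.castHom (dvd_refl p) F (c t) * (x 1 + ((t : ℕ) : F)) ^ (p - 1)
          * ∏ i ∈ Finset.univ.filter (fun i : Fin (n + 3) => 2 ≤ (i : ℕ)), x i ^ (p - 1))) :
    (List.ofFn Ft).foldr (· ∘ ·) id = fun x : Fin (n + 3) → F =>
      Function.update x 0
        (x 0 + x 1 ^ α₂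
          * ∏ i ∈ Finset.univ.filter (fun i : Fin (n + 3) => 2 ≤ (i : ℕ)), x i ^ (p - 1)) :=
  interpolation_composition_general p n α₂ F c hc Ft hFt
end
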